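/- Let K be a smooth solution of the oriented associativity equations (AE) on ℝⁿ, let λ ∈ ℝ, let ψ = (ψ^1,…,ψ^n) be a smooth solution of the vector spectral problem ∂_β ψ^α = λ ∂_β∂_γ K^α ψ^γ for all α,β, and let χ be a smooth solution of the scalar spectral problem with parameter −λ, i.e. ∂_α∂_γ χ = −λ ∂_α∂_γ K^ν ∂_ν χ for all α,γ. Then G^α = ψ^α · χ is a symmetry characteristic of (AE) at K, i.e. it satisfies the linearized oriented associativity equations (LAE). -/

import Mathlib

/-- Partial derivative of `f` in the `i`-th coordinate direction on `ℝⁿ`. -/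
noncomputable def pd {n : ℕ} (i : Fin n) (f : (Fin n → ℝ) → ℝ) : (Fin n → ℝ) → ℝ :=
  fun x => fderiv ℝ f x (Pi.single i 1)

lemma contDiff_pd {n : ℕ} (i : Fin n) {f : (Fin n → ℝ) → ℝ} (hf : ContDiff ℝ (⊤ : ℕ∞) f) :
    ContDiff ℝ (⊤ : ℕ∞) (pd i f) :=
  (hf.fderiv_right (by simp)).clm_apply contDiff_const


lemma pd_eq_snd {n : ℕ} (i j : Fin n) {f : (Fin n → ℝ) → ℝ} (hf : ContDiff ℝ (⊤ : ℕ∞) f)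
    (x : Fin n → ℝ) :
    pd i (pd j f) x = fderiv ℝ (fderiv ℝ f) x (Pi.single i 1) (Pi.single j 1) := by
  have hd : ContDiff ℝ (⊤ : ℕ∞) (fderiv ℝ f) := hf.fderiv_right (by simp)
  rw [show pd i (pd j f) x
      = fderiv ℝ (fun y => (fderiv ℝ f y) (Pi.single j 1)) x (Pi.single i 1) from rfl]
  rw [fderiv_clm_apply (hd.differentiable (by simp) x) (differentiableAt_const _)]
  simp

lemma pd_comm {n : ℕ} (i j : Fin n) {f : (Fin n → ℝ) → ℝ} (hf : ContDiff ℝ (⊤ : ℕ∞) f)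
    (x : Fin n → ℝ) : pd i (pd j f) x = pd j (pd i f) x := by
  rw [pd_eq_snd i j hf, pd_eq_snd j i hf]
  exact ((hf.contDiffAt).isSymmSndFDerivAt (by norm_num; exact WithTop.coe_le_coe.mpr le_top)) _ _

lemma pd_mul {n : ℕ} (i : Fin n) {f g : (Fin n → ℝ) → ℝ} (hf : ContDiff ℝ (⊤ : ℕ∞) f)
    (hg : ContDiff ℝ (⊤ : ℕ∞) g) (x : Fin n → ℝ) :
    pd i (fun y => f y * g y) x = pd i f x * g x + f x * pd i g x := by
  unfold pd
  rw [fderiv_fun_mul (hf.differentiable (by simp) x) (hg.differentiable (by simp) x)]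
  simp; ring

lemma pd_add {n : ℕ} (i : Fin n) {f g : (Fin n → ℝ) → ℝ} (hf : ContDiff ℝ (⊤ : ℕ∞) f)
    (hg : ContDiff ℝ (⊤ : ℕ∞) g) (x : Fin n → ℝ) :
    pd i (fun y => f y + g y) x = pd i f x + pd i g x := by
  unfold pd
  rw [fderiv_fun_add (hf.differentiable (by simp) x) (hg.differentiable (by simp) x)]
  simp

lemma pd_sum {n : ℕ} (i : Fin n) {m : Type*} [Fintype m] {f : m → (Fin n → ℝ) → ℝ}
    (hf : ∀ j, ContDiff ℝ (⊤ : ℕ∞) (f j)) (x : Fin n → ℝ) :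
    pd i (fun y => ∑ j, f j y) x = ∑ j, pd i (f j) x := by
  unfold pd
  rw [fderiv_fun_sum (fun j _ => (hf j).differentiable (by simp) x)]
  simp

lemma pd_const_mul {n : ℕ} (i : Fin n) (c : ℝ) {f : (Fin n → ℝ) → ℝ}
    (hf : ContDiff ℝ (⊤ : ℕ∞) f) (x : Fin n → ℝ) :
    pd i (fun y => c * f y) x = c * pd i f x := by
  unfold pd
  rw [fderiv_const_mul (hf.differentiable (by simp) x)]
  simp

/-- the abstract second-derivative expression of `ψ^ν χ` -/
noncomputable def D2 {n : ℕ} (a : Fin n → Fin n → Fin n → ℝ)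
    (t : Fin n → Fin n → Fin n → Fin n → ℝ) (p dch : Fin n → ℝ) (ch lam : ℝ)
    (i j ν : Fin n) : ℝ :=
  (lam * ∑ c, (t ν i j c * p c + a ν j c * (lam * ∑ d, a c i d * p d))) * ch
  + (lam * ∑ c, a ν j c * p c) * dch i
  + (lam * ∑ c, a ν i c * p c) * dch j
  + p ν * (-lam * ∑ c, a c i j * dch c)

lemma D2G_eq {n : ℕ}
    (K ψ : Fin n → (Fin n → ℝ) → ℝ) (χ : (Fin n → ℝ) → ℝ) (lam : ℝ)
    (hK : ∀ α, ContDiff ℝ (⊤ : ℕ∞) (K α))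
    (hψ : ∀ α, ContDiff ℝ (⊤ : ℕ∞) (ψ α))
    (hχ : ContDiff ℝ (⊤ : ℕ∞) χ)
    (hsp : ∀ α β, ∀ x : Fin n → ℝ,
      pd β (ψ α) x = lam * ∑ γ, pd β (pd γ (K α)) x * ψ γ x)
    (hssp : ∀ α γ, ∀ x : Fin n → ℝ,
      pd α (pd γ χ) x = (-lam) * ∑ ν, pd α (pd γ (K ν)) x * pd ν χ x)
    (i j ν : Fin n) (x : Fin n → ℝ) :
    pd i (pd j (fun y => ψ ν y * χ y)) x
      = D2 (fun ν i j => pd i (pd j (K ν)) x)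
          (fun ν i j k => pd i (pd j (pd k (K ν))) x)
          (fun c => ψ c x) (fun c => pd c χ x) (χ x) lam i j ν := by
  have hKd : ∀ ν j, ContDiff ℝ (⊤ : ℕ∞) (pd j (K ν)) := fun ν j => contDiff_pd j (hK ν)
  have hKdd : ∀ ν i j, ContDiff ℝ (⊤ : ℕ∞) (pd i (pd j (K ν))) := fun ν i j => contDiff_pd i (hKd ν j)
  have hψd : ∀ ν j, ContDiff ℝ (⊤ : ℕ∞) (pd j (ψ ν)) := fun ν j => contDiff_pd j (hψ ν)
  have hχd : ∀ j, ContDiff ℝ (⊤ : ℕ∞) (pd j χ) := fun j => contDiff_pd j hχ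
  -- step 1 : product rule at the function level
  have h1 : pd j (fun y => ψ ν y * χ y) = fun y => pd j (ψ ν) y * χ y + ψ ν y * pd j χ y :=
    funext fun y => pd_mul j (hψ ν) hχ y
  rw [h1, pd_add i ((hψd ν j).mul hχ) ((hψ ν).mul (hχd j)) x,
    pd_mul i (hψd ν j) hχ x, pd_mul i (hψ ν) (hχd j) x]
  -- second derivative of ψ
  have h2 : pd j (ψ ν) = fun y => lam * ∑ c, pd j (pd c (K ν)) y * ψ c y :=
    funext fun y => hsp ν j y
  have h3 : pd i (pd j (ψ ν)) x
      = lam * ∑ c, (pd i (pd j (pd c (K ν))) x * ψ c x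
          + pd j (pd c (K ν)) x * (lam * ∑ d, pd i (pd d (K c)) x * ψ d x)) := by
    rw [h2, pd_const_mul i lam (ContDiff.sum fun c _ => (hKdd ν j c).mul (hψ c)) x,
      pd_sum i (fun c => (hKdd ν j c).mul (hψ c)) x]
    congr 1
    refine Finset.sum_congr rfl fun c _ => ?_
    rw [pd_mul i (hKdd ν j c) (hψ c) x, hsp c i x]
  rw [h3, hssp i j x, hsp ν j x, hsp ν i x]
  simp only [D2]
  ring

section Alg
variable {n : ℕ} (a : Fin n → Fin n → Fin n → ℝ)

lemma comm_aux
    (ha : ∀ ν i j, a ν i j = a ν j i)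
    (hAE : ∀ α β γ ν, ∑ ρ, a ν α ρ * a ρ β γ = ∑ ρ, a ρ α β * a ν ρ γ)
    (i j ν d : Fin n) :
    ∑ ρ, a ν i ρ * a ρ j d = ∑ ρ, a ν j ρ * a ρ i d := by
  rw [hAE i j d ν, hAE j i d ν]
  exact Finset.sum_congr rfl fun ρ _ => by rw [ha ρ i j]

lemma key (t : Fin n → Fin n → Fin n → Fin n → ℝ) (p dch : Fin n → ℝ) (ch lam : ℝ)
    (ha : ∀ ν i j, a ν i j = a ν j i)
    (ht : ∀ ν i j k, t ν i j k = t ν j i k)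
    (ht2 : ∀ ν i j k, t ν i j k = t ν i k j)
    (hAE : ∀ α β γ ν, ∑ ρ, a ν α ρ * a ρ β γ = ∑ ρ, a ρ α β * a ν ρ γ)
    (hdAE : ∀ c α β γ ν, ∑ ρ, (t ν c α ρ * a ρ β γ + a ν α ρ * t ρ c β γ)
        = ∑ ρ, (t ρ c α β * a ν ρ γ + a ρ α β * t ν c ρ γ))
    (α β γ ν : Fin n) :
    ∑ ρ, D2 a t p dch ch lam α ρ ν * a ρ β γ + ∑ ρ, a ν α ρ * D2 a t p dch ch lam β γ ρ
      = ∑ ρ, D2 a t p dch ch lam α β ρ * a ν ρ γ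
        + ∑ ρ, a ρ α β * D2 a t p dch ch lam ρ γ ν := by
  -- Group G1 : third-derivative terms, from the differentiated AE
  have G1 : (∑ ρ, ∑ c, lam * (t ν α ρ c * p c) * ch * a ρ β γ)
      + (∑ ρ, ∑ c, a ν α ρ * (lam * (t ρ β γ c * p c) * ch))
      = (∑ ρ, ∑ c, lam * (t ρ α β c * p c) * ch * a ν ρ γ)
      + (∑ ρ, ∑ c, a ρ α β * (lam * (t ν ρ γ c * p c) * ch)) := by
    calc (∑ ρ, ∑ c, lam * (t ν α ρ c * p c) * ch * a ρ β γ)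
          + (∑ ρ, ∑ c, a ν α ρ * (lam * (t ρ β γ c * p c) * ch))
        = ∑ c, ∑ ρ, (t ν c α ρ * a ρ β γ + a ν α ρ * t ρ c β γ) * (lam * p c * ch) := by
          rw [show (∑ ρ, ∑ c, lam * (t ν α ρ c * p c) * ch * a ρ β γ)
              = ∑ c, ∑ ρ, lam * (t ν α ρ c * p c) * ch * a ρ β γ from Finset.sum_comm,
            show (∑ ρ, ∑ c, a ν α ρ * (lam * (t ρ β γ c * p c) * ch))
              = ∑ c, ∑ ρ, a ν α ρ * (lam * (t ρ β γ c * p c) * ch) from Finset.sum_comm,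
            ← Finset.sum_add_distrib]
          refine Finset.sum_congr rfl fun c _ => ?_
          rw [← Finset.sum_add_distrib]
          refine Finset.sum_congr rfl fun ρ _ => ?_
          rw [show t ν α ρ c = t ν c α ρ from (ht2 ν α ρ c).trans (ht ν α c ρ),
            show t ρ β γ c = t ρ c β γ from (ht2 ρ β γ c).trans (ht ρ β c γ)]
          ring
      _ = ∑ c, ∑ ρ, (t ρ c α β * a ν ρ γ + a ρ α β * t ν c ρ γ) * (lam * p c * ch) :=
          Finset.sum_congr rfl fun c _ => by
            rw [← Finset.sum_mul, hdAE c α β γ ν, Finset.sum_mul]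
      _ = (∑ ρ, ∑ c, lam * (t ρ α β c * p c) * ch * a ν ρ γ)
          + (∑ ρ, ∑ c, a ρ α β * (lam * (t ν ρ γ c * p c) * ch)) := by
          rw [show (∑ ρ, ∑ c, lam * (t ρ α β c * p c) * ch * a ν ρ γ)
              = ∑ c, ∑ ρ, lam * (t ρ α β c * p c) * ch * a ν ρ γ from Finset.sum_comm,
            show (∑ ρ, ∑ c, a ρ α β * (lam * (t ν ρ γ c * p c) * ch))
              = ∑ c, ∑ ρ, a ρ α β * (lam * (t ν ρ γ c * p c) * ch) from Finset.sum_comm,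
            ← Finset.sum_add_distrib]
          refine Finset.sum_congr rfl fun c _ => ?_
          rw [← Finset.sum_add_distrib]
          refine Finset.sum_congr rfl fun ρ _ => ?_
          rw [show t ρ α β c = t ρ c α β from (ht2 ρ α β c).trans (ht ρ α c β),
            show t ν ρ γ c = t ν c ρ γ from (ht2 ν ρ γ c).trans (ht ν ρ c γ)]
          ring
  -- Group Gα : terms with dch α
  have Gα : (∑ ρ, ∑ c, lam * (a ν ρ c * p c) * dch α * a ρ β γ)
      = ∑ ρ, ∑ c, lam * (a ρ β c * p c) * dch α * a ν ρ γ := by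
    calc (∑ ρ, ∑ c, lam * (a ν ρ c * p c) * dch α * a ρ β γ)
        = ∑ c, ∑ ρ, (a ν c ρ * a ρ β γ) * (lam * p c * dch α) := by
          rw [show (∑ ρ, ∑ c, lam * (a ν ρ c * p c) * dch α * a ρ β γ)
              = ∑ c, ∑ ρ, lam * (a ν ρ c * p c) * dch α * a ρ β γ from Finset.sum_comm]
          refine Finset.sum_congr rfl fun c _ => Finset.sum_congr rfl fun ρ _ => ?_
          rw [ha ν ρ c]; ring
      _ = ∑ c, ∑ ρ, (a ρ c β * a ν ρ γ) * (lam * p c * dch α) :=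
          Finset.sum_congr rfl fun c _ => by
            rw [← Finset.sum_mul, hAE c β γ ν, Finset.sum_mul]
      _ = ∑ ρ, ∑ c, lam * (a ρ β c * p c) * dch α * a ν ρ γ := by
          rw [show (∑ ρ, ∑ c, lam * (a ρ β c * p c) * dch α * a ν ρ γ)
              = ∑ c, ∑ ρ, lam * (a ρ β c * p c) * dch α * a ν ρ γ from Finset.sum_comm]
          refine Finset.sum_congr rfl fun c _ => Finset.sum_congr rfl fun ρ _ => ?_
          rw [ha ρ c β]; ring
  -- Group Gβ : terms with dch β
  have Gβ : (∑ ρ, ∑ c, a ν α ρ * (lam * (a ρ γ c * p c) * dch β))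
      = ∑ ρ, ∑ c, lam * (a ρ α c * p c) * dch β * a ν ρ γ := by
    calc (∑ ρ, ∑ c, a ν α ρ * (lam * (a ρ γ c * p c) * dch β))
        = ∑ c, ∑ ρ, (a ν α ρ * a ρ γ c) * (lam * p c * dch β) := by
          rw [show (∑ ρ, ∑ c, a ν α ρ * (lam * (a ρ γ c * p c) * dch β))
              = ∑ c, ∑ ρ, a ν α ρ * (lam * (a ρ γ c * p c) * dch β) from Finset.sum_comm]
          exact Finset.sum_congr rfl fun c _ => Finset.sum_congr rfl fun ρ _ => by ring
      _ = ∑ c, ∑ ρ, (a ν γ ρ * a ρ α c) * (lam * p c * dch β) :=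
          Finset.sum_congr rfl fun c _ => by
            rw [← Finset.sum_mul, comm_aux a ha hAE α γ ν c, Finset.sum_mul]
      _ = ∑ ρ, ∑ c, lam * (a ρ α c * p c) * dch β * a ν ρ γ := by
          rw [show (∑ ρ, ∑ c, lam * (a ρ α c * p c) * dch β * a ν ρ γ)
              = ∑ c, ∑ ρ, lam * (a ρ α c * p c) * dch β * a ν ρ γ from Finset.sum_comm]
          refine Finset.sum_congr rfl fun c _ => Finset.sum_congr rfl fun ρ _ => ?_
          rw [ha ν ρ γ]; ring
  -- Group Gγ : terms with dch γ
  have Gγ : (∑ ρ, ∑ c, a ν α ρ * (lam * (a ρ β c * p c) * dch γ))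
      = ∑ ρ, ∑ c, a ρ α β * (lam * (a ν ρ c * p c) * dch γ) := by
    calc (∑ ρ, ∑ c, a ν α ρ * (lam * (a ρ β c * p c) * dch γ))
        = ∑ c, ∑ ρ, (a ν α ρ * a ρ β c) * (lam * p c * dch γ) := by
          rw [show (∑ ρ, ∑ c, a ν α ρ * (lam * (a ρ β c * p c) * dch γ))
              = ∑ c, ∑ ρ, a ν α ρ * (lam * (a ρ β c * p c) * dch γ) from Finset.sum_comm]
          exact Finset.sum_congr rfl fun c _ => Finset.sum_congr rfl fun ρ _ => by ring
      _ = ∑ c, ∑ ρ, (a ρ α β * a ν ρ c) * (lam * p c * dch γ) :=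
          Finset.sum_congr rfl fun c _ => by
            rw [← Finset.sum_mul, hAE α β c ν, Finset.sum_mul]
      _ = ∑ ρ, ∑ c, a ρ α β * (lam * (a ν ρ c * p c) * dch γ) := by
          rw [show (∑ ρ, ∑ c, a ρ α β * (lam * (a ν ρ c * p c) * dch γ))
              = ∑ c, ∑ ρ, a ρ α β * (lam * (a ν ρ c * p c) * dch γ) from Finset.sum_comm]
          exact Finset.sum_congr rfl fun c _ => Finset.sum_congr rfl fun ρ _ => by ring
  -- Group Gν : terms with p ν and contracted dch
  have Gν : (∑ ρ, ∑ c, p ν * (-lam * (a c α ρ * dch c)) * a ρ β γ)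
      = ∑ ρ, ∑ c, a ρ α β * (p ν * (-lam * (a c ρ γ * dch c))) := by
    calc (∑ ρ, ∑ c, p ν * (-lam * (a c α ρ * dch c)) * a ρ β γ)
        = ∑ c, ∑ ρ, (a c α ρ * a ρ β γ) * (p ν * -lam * dch c) := by
          rw [show (∑ ρ, ∑ c, p ν * (-lam * (a c α ρ * dch c)) * a ρ β γ)
              = ∑ c, ∑ ρ, p ν * (-lam * (a c α ρ * dch c)) * a ρ β γ from Finset.sum_comm]
          exact Finset.sum_congr rfl fun c _ => Finset.sum_congr rfl fun ρ _ => by ring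
      _ = ∑ c, ∑ ρ, (a ρ α β * a c ρ γ) * (p ν * -lam * dch c) :=
          Finset.sum_congr rfl fun c _ => by
            rw [← Finset.sum_mul, hAE α β γ c, Finset.sum_mul]
      _ = ∑ ρ, ∑ c, a ρ α β * (p ν * (-lam * (a c ρ γ * dch c))) := by
          rw [show (∑ ρ, ∑ c, a ρ α β * (p ν * (-lam * (a c ρ γ * dch c))))
              = ∑ c, ∑ ρ, a ρ α β * (p ν * (-lam * (a c ρ γ * dch c))) from Finset.sum_comm]
          exact Finset.sum_congr rfl fun c _ => Finset.sum_congr rfl fun ρ _ => by ring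
  -- Cancellation 1
  have C1 : (∑ ρ, ∑ c, lam * (a ν α c * p c) * dch ρ * a ρ β γ)
      + (∑ ρ, ∑ c, a ν α ρ * (p ρ * (-lam * (a c β γ * dch c)))) = 0 := by
    have h : (∑ ρ, ∑ c, lam * (a ν α c * p c) * dch ρ * a ρ β γ)
        = ∑ ρ, ∑ c, -(a ν α ρ * (p ρ * (-lam * (a c β γ * dch c)))) := by
      rw [show (∑ ρ, ∑ c, lam * (a ν α c * p c) * dch ρ * a ρ β γ)
          = ∑ c, ∑ ρ, lam * (a ν α c * p c) * dch ρ * a ρ β γ from Finset.sum_comm]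
      exact Finset.sum_congr rfl fun c _ => Finset.sum_congr rfl fun ρ _ => by ring
    rw [h, ← Finset.sum_add_distrib]
    refine Finset.sum_eq_zero fun ρ _ => ?_
    rw [← Finset.sum_add_distrib]
    exact Finset.sum_eq_zero fun c _ => by ring
  -- Cancellation 2
  have C2 : (∑ ρ, ∑ c, p ρ * (-lam * (a c α β * dch c)) * a ν ρ γ)
      + (∑ ρ, ∑ c, a ρ α β * (lam * (a ν γ c * p c) * dch ρ)) = 0 := by
    have h : (∑ ρ, ∑ c, a ρ α β * (lam * (a ν γ c * p c) * dch ρ))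
        = ∑ ρ, ∑ c, -(p ρ * (-lam * (a c α β * dch c)) * a ν ρ γ) := by
      rw [show (∑ ρ, ∑ c, a ρ α β * (lam * (a ν γ c * p c) * dch ρ))
          = ∑ c, ∑ ρ, a ρ α β * (lam * (a ν γ c * p c) * dch ρ) from Finset.sum_comm]
      refine Finset.sum_congr rfl fun c _ => Finset.sum_congr rfl fun ρ _ => ?_
      rw [ha ν c γ]; ring
    rw [h, ← Finset.sum_add_distrib]
    refine Finset.sum_eq_zero fun ρ _ => ?_
    rw [← Finset.sum_add_distrib]
    exact Finset.sum_eq_zero fun c _ => by ring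
  -- Group G2a : λ² terms, L2 = R2
  have G2a : (∑ ρ, ∑ c, ∑ d, lam * (a ν ρ c * (lam * (a c α d * p d))) * ch * a ρ β γ)
      = ∑ ρ, ∑ c, ∑ d, lam * (a ρ β c * (lam * (a c α d * p d))) * ch * a ν ρ γ := by
    calc (∑ ρ, ∑ c, ∑ d, lam * (a ν ρ c * (lam * (a c α d * p d))) * ch * a ρ β γ)
        = ∑ c, ∑ ρ, ∑ d, lam * (a ν ρ c * (lam * (a c α d * p d))) * ch * a ρ β γ :=
          Finset.sum_comm
      _ = ∑ c, ∑ d, ∑ ρ, lam * (a ν ρ c * (lam * (a c α d * p d))) * ch * a ρ β γ :=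
          Finset.sum_congr rfl fun c _ => Finset.sum_comm
      _ = ∑ c, ∑ d, ∑ ρ, (a ν c ρ * a ρ β γ) * (lam * lam * a c α d * p d * ch) :=
          Finset.sum_congr rfl fun c _ => Finset.sum_congr rfl fun d _ =>
            Finset.sum_congr rfl fun ρ _ => by rw [ha ν ρ c]; ring
      _ = ∑ c, ∑ d, ∑ ρ, (a ρ c β * a ν ρ γ) * (lam * lam * a c α d * p d * ch) :=
          Finset.sum_congr rfl fun c _ => Finset.sum_congr rfl fun d _ => by
            rw [← Finset.sum_mul, hAE c β γ ν, Finset.sum_mul]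
      _ = ∑ c, ∑ d, ∑ ρ, lam * (a ρ β c * (lam * (a c α d * p d))) * ch * a ν ρ γ :=
          Finset.sum_congr rfl fun c _ => Finset.sum_congr rfl fun d _ =>
            Finset.sum_congr rfl fun ρ _ => by rw [ha ρ c β]; ring
      _ = ∑ c, ∑ ρ, ∑ d, lam * (a ρ β c * (lam * (a c α d * p d))) * ch * a ν ρ γ :=
          Finset.sum_congr rfl fun c _ => Finset.sum_comm
      _ = ∑ ρ, ∑ c, ∑ d, lam * (a ρ β c * (lam * (a c α d * p d))) * ch * a ν ρ γ :=
          Finset.sum_comm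
  -- Group G2b : λ² terms, M2 = S2, via common middle
  have G2b : (∑ ρ, ∑ c, ∑ d, a ν α ρ * (lam * (a ρ γ c * (lam * (a c β d * p d))) * ch))
      = ∑ ρ, ∑ c, ∑ d, a ρ α β * (lam * (a ν γ c * (lam * (a c ρ d * p d))) * ch) := by
    have hM : (∑ ρ, ∑ c, ∑ d, a ν α ρ * (lam * (a ρ γ c * (lam * (a c β d * p d))) * ch))
        = ∑ ρ, ∑ c, ∑ d, (a ν α ρ * a ρ β c) * (a c γ d * (lam * lam * p d * ch)) := by
      calc (∑ ρ, ∑ c, ∑ d, a ν α ρ * (lam * (a ρ γ c * (lam * (a c β d * p d))) * ch))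
          = ∑ ρ, ∑ d, ∑ c, (a ρ γ c * a c β d) * (a ν α ρ * (lam * lam * p d * ch)) := by
            refine Finset.sum_congr rfl fun ρ _ => ?_
            rw [show (∑ c, ∑ d, a ν α ρ * (lam * (a ρ γ c * (lam * (a c β d * p d))) * ch))
                = ∑ d, ∑ c, a ν α ρ * (lam * (a ρ γ c * (lam * (a c β d * p d))) * ch)
                from Finset.sum_comm]
            exact Finset.sum_congr rfl fun d _ => Finset.sum_congr rfl fun c _ => by ring
        _ = ∑ ρ, ∑ d, ∑ c, (a ρ β c * a c γ d) * (a ν α ρ * (lam * lam * p d * ch)) :=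
            Finset.sum_congr rfl fun ρ _ => Finset.sum_congr rfl fun d _ => by
              rw [← Finset.sum_mul, comm_aux a ha hAE γ β ρ d, Finset.sum_mul]
        _ = ∑ ρ, ∑ c, ∑ d, (a ν α ρ * a ρ β c) * (a c γ d * (lam * lam * p d * ch)) := by
            refine Finset.sum_congr rfl fun ρ _ => ?_
            rw [show (∑ c, ∑ d, (a ν α ρ * a ρ β c) * (a c γ d * (lam * lam * p d * ch)))
                = ∑ d, ∑ c, (a ν α ρ * a ρ β c) * (a c γ d * (lam * lam * p d * ch))
                from Finset.sum_comm]
            exact Finset.sum_congr rfl fun d _ => Finset.sum_congr rfl fun c _ => by ring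
    have hS : (∑ ρ, ∑ c, ∑ d, a ρ α β * (lam * (a ν γ c * (lam * (a c ρ d * p d))) * ch))
        = ∑ ρ, ∑ c, ∑ d, (a ν α ρ * a ρ β c) * (a c γ d * (lam * lam * p d * ch)) := by
      calc (∑ ρ, ∑ c, ∑ d, a ρ α β * (lam * (a ν γ c * (lam * (a c ρ d * p d))) * ch))
          = ∑ ρ, ∑ d, ∑ c, (a ν γ c * a c ρ d) * (a ρ α β * (lam * lam * p d * ch)) := by
            refine Finset.sum_congr rfl fun ρ _ => ?_
            rw [show (∑ c, ∑ d, a ρ α β * (lam * (a ν γ c * (lam * (a c ρ d * p d))) * ch))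
                = ∑ d, ∑ c, a ρ α β * (lam * (a ν γ c * (lam * (a c ρ d * p d))) * ch)
                from Finset.sum_comm]
            exact Finset.sum_congr rfl fun d _ => Finset.sum_congr rfl fun c _ => by ring
        _ = ∑ ρ, ∑ d, ∑ c, (a ν ρ c * a c γ d) * (a ρ α β * (lam * lam * p d * ch)) :=
            Finset.sum_congr rfl fun ρ _ => Finset.sum_congr rfl fun d _ => by
              rw [← Finset.sum_mul, comm_aux a ha hAE γ ρ ν d, Finset.sum_mul]
        _ = ∑ c, ∑ d, ∑ ρ, (a ρ α β * a ν ρ c) * (a c γ d * (lam * lam * p d * ch)) := by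
            rw [show (∑ ρ, ∑ d, ∑ c, (a ν ρ c * a c γ d) * (a ρ α β * (lam * lam * p d * ch)))
                = ∑ d, ∑ ρ, ∑ c, (a ν ρ c * a c γ d) * (a ρ α β * (lam * lam * p d * ch))
                from Finset.sum_comm]
            rw [show (∑ c, ∑ d, ∑ ρ, (a ρ α β * a ν ρ c) * (a c γ d * (lam * lam * p d * ch)))
                = ∑ d, ∑ c, ∑ ρ, (a ρ α β * a ν ρ c) * (a c γ d * (lam * lam * p d * ch))
                from Finset.sum_comm]
            refine Finset.sum_congr rfl fun d _ => ?_
            rw [show (∑ ρ, ∑ c, (a ν ρ c * a c γ d) * (a ρ α β * (lam * lam * p d * ch)))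
                = ∑ c, ∑ ρ, (a ν ρ c * a c γ d) * (a ρ α β * (lam * lam * p d * ch))
                from Finset.sum_comm]
            exact Finset.sum_congr rfl fun c _ => Finset.sum_congr rfl fun ρ _ => by ring
        _ = ∑ c, ∑ d, ∑ ρ, (a ν α ρ * a ρ β c) * (a c γ d * (lam * lam * p d * ch)) :=
            Finset.sum_congr rfl fun c _ => Finset.sum_congr rfl fun d _ => by
              rw [← Finset.sum_mul, ← hAE α β c ν, Finset.sum_mul]
        _ = ∑ c, ∑ ρ, ∑ d, (a ν α ρ * a ρ β c) * (a c γ d * (lam * lam * p d * ch)) :=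
            Finset.sum_congr rfl fun c _ => Finset.sum_comm
        _ = ∑ ρ, ∑ c, ∑ d, (a ν α ρ * a ρ β c) * (a c γ d * (lam * lam * p d * ch)) :=
            Finset.sum_comm
    rw [hM, hS]
  -- assemble
  simp only [D2, Finset.sum_add_distrib, add_mul, mul_add, Finset.mul_sum, Finset.sum_mul]
  linarith [G1, Gα, Gβ, Gγ, Gν, C1, C2, G2a, G2b]

end Alg

/-- symmetry of third derivatives in the first two slots -/
lemma pd_comm3 {n : ℕ} (i j k : Fin n) {f : (Fin n → ℝ) → ℝ} (hf : ContDiff ℝ (⊤ : ℕ∞) f)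
    (x : Fin n → ℝ) : pd i (pd j (pd k f)) x = pd j (pd i (pd k f)) x :=
  pd_comm i j (contDiff_pd k hf) x

/-- `ψ^α · χ`, with `ψ` a solution of the vector spectral problem with
parameter `λ` and `χ` a solution of the scalar spectral problem with parameter `−λ`,
is a symmetry characteristic of the oriented associativity equations. -/
theorem psi_chi_is_symmetry
    {n : ℕ} (hn : 1 ≤ n)
    (K ψ : Fin n → (Fin n → ℝ) → ℝ) (χ : (Fin n → ℝ) → ℝ) (lam : ℝ)
    (hK : ∀ α, ContDiff ℝ (⊤ : ℕ∞) (K α))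
    (hψ : ∀ α, ContDiff ℝ (⊤ : ℕ∞) (ψ α))
    (hχ : ContDiff ℝ (⊤ : ℕ∞) χ)
    (hAE : ∀ α β γ ν, ∀ x : Fin n → ℝ,
      ∑ ρ, pd α (pd ρ (K ν)) x * pd β (pd γ (K ρ)) x
        = ∑ ρ, pd α (pd β (K ρ)) x * pd ρ (pd γ (K ν)) x)
    (hsp : ∀ α β, ∀ x : Fin n → ℝ,
      pd β (ψ α) x = lam * ∑ γ, pd β (pd γ (K α)) x * ψ γ x)
    (hssp : ∀ α γ, ∀ x : Fin n → ℝ,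
      pd α (pd γ χ) x = (-lam) * ∑ ν, pd α (pd γ (K ν)) x * pd ν χ x) :
    ∀ α β γ ν, ∀ x : Fin n → ℝ,
      (∑ ρ, pd α (pd ρ (fun y => ψ ν y * χ y)) x * pd β (pd γ (K ρ)) x)
        + (∑ ρ, pd α (pd ρ (K ν)) x * pd β (pd γ (fun y => ψ ρ y * χ y)) x)
      = (∑ ρ, pd α (pd β (fun y => ψ ρ y * χ y)) x * pd ρ (pd γ (K ν)) x)
        + (∑ ρ, pd α (pd β (K ρ)) x * pd ρ (pd γ (fun y => ψ ν y * χ y)) x) := by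
  intro α β γ ν x
  have hKd : ∀ ν j, ContDiff ℝ (⊤ : ℕ∞) (pd j (K ν)) := fun ν j => contDiff_pd j (hK ν)
  have hKdd : ∀ ν i j, ContDiff ℝ (⊤ : ℕ∞) (pd i (pd j (K ν))) := fun ν i j => contDiff_pd i (hKd ν j)
  -- abbreviations at the point x
  set a : Fin n → Fin n → Fin n → ℝ := fun ν i j => pd i (pd j (K ν)) x with ha_def
  set t : Fin n → Fin n → Fin n → Fin n → ℝ := fun ν i j k => pd i (pd j (pd k (K ν))) x
    with ht_def
  -- symmetry hypotheses
  have ha : ∀ ν i j, a ν i j = a ν j i := fun ν i j => pd_comm i j (hK ν) x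
  have ht : ∀ ν i j k, t ν i j k = t ν j i k := fun ν i j k => pd_comm3 i j k (hK ν) x
  have ht2 : ∀ ν i j k, t ν i j k = t ν i k j := by
    intro ν i j k
    have : pd j (pd k (K ν)) = pd k (pd j (K ν)) := funext fun y => pd_comm j k (hK ν) y
    simp only [ht_def, this]
  -- pointwise AE at x
  have hAEx : ∀ α β γ ν, ∑ ρ, a ν α ρ * a ρ β γ = ∑ ρ, a ρ α β * a ν ρ γ :=
    fun α β γ ν => hAE α β γ ν x
  -- differentiated AE at x
  have hdAE : ∀ c α β γ ν, ∑ ρ, (t ν c α ρ * a ρ β γ + a ν α ρ * t ρ c β γ)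
      = ∑ ρ, (t ρ c α β * a ν ρ γ + a ρ α β * t ν c ρ γ) := by
    intro c α' β' γ' ν'
    have hfun : (fun y => ∑ ρ, pd α' (pd ρ (K ν')) y * pd β' (pd γ' (K ρ)) y)
        = fun y => ∑ ρ, pd α' (pd β' (K ρ)) y * pd ρ (pd γ' (K ν')) y :=
      funext fun y => hAE α' β' γ' ν' y
    have h1 : pd c (fun y => ∑ ρ, pd α' (pd ρ (K ν')) y * pd β' (pd γ' (K ρ)) y) x
        = ∑ ρ, (t ν' c α' ρ * a ρ β' γ' + a ν' α' ρ * t ρ c β' γ') := by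
      rw [pd_sum c (fun ρ => (hKdd ν' α' ρ).mul (hKdd ρ β' γ')) x]
      exact Finset.sum_congr rfl fun ρ _ =>
        pd_mul c (hKdd ν' α' ρ) (hKdd ρ β' γ') x
    have h2 : pd c (fun y => ∑ ρ, pd α' (pd β' (K ρ)) y * pd ρ (pd γ' (K ν')) y) x
        = ∑ ρ, (t ρ c α' β' * a ν' ρ γ' + a ρ α' β' * t ν' c ρ γ') := by
      rw [pd_sum c (fun ρ => (hKdd ρ α' β').mul (hKdd ν' ρ γ')) x]
      exact Finset.sum_congr rfl fun ρ _ =>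
        pd_mul c (hKdd ρ α' β') (hKdd ν' ρ γ') x
    rw [← h1, ← h2, hfun]
  -- rewrite the second derivatives of ψ·χ using D2G_eq
  have hD2 : ∀ i j μ, pd i (pd j (fun y => ψ μ y * χ y)) x
      = D2 a t (fun c => ψ c x) (fun c => pd c χ x) (χ x) lam i j μ :=
    fun i j μ => D2G_eq K ψ χ lam hK hψ hχ hsp hssp i j μ x
  have := key a t (fun c => ψ c x) (fun c => pd c χ x) (χ x) lam ha ht ht2 hAEx hdAE α β γ ν
  simp only [hD2]
  exact this
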